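/- arXiv:1908.06383 — 2 statements merged into one kernel-verified Lean document; each statement's English description precedes it below -/
import Mathlib

section
/- Zeroes of the one-cell functions in the lower half-plane (Lemma 3.6, location): let γ > 0 and set r₀ := (6/5)·max{1, √γ}. Then every zero k ∈ ℂ of F₊(·,γ) with Im k ≤ 0 satisfies |k| < √γ·r₀, and the set of such zeroes is finite; the same holds for F₋(·,γ). -/
/-!
If `w ^ 2 = k ^ 2 + iγ` then `c(k ^ 2 + iγ) = cos w` and `w s(k ^ 2 + iγ) = sin w`, so
`w F₊(k, γ) = (i/2) ((w + k) ^ 2 e^{iw} - (w - k) ^ 2 e^{-iw})`. At a zero, squaring this balance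
and using `(w - k)(w + k) = iγ` gives `|w + k| ^ 2 = γ e^{Im w}`. Choose the root `w` with
`Re (w k̄) ≥ 0`, so that `|w + k| ≥ |k|`. If `Im k ≤ 0` and `|k| ≥ r₀ √γ`, then
`|w - k| = γ / |w + k|` is below `2/3`, hence so is `Im w ≤ Im k + |w - k|`, while
`|w + k| ≥ 2|k| - |w - k| ≥ (47/36)|k|` gives `|w + k| ^ 2 ≥ (47/30) ^ 2 γ > 2γ > γ e^{2/3}`.

Finiteness: `F₊(·, γ)` is entire and, by the bound, nonzero at large real `k`, so its zeros in a
bounded set are finitely many. Finally `F₋(k, γ) = conj F₊(-k̄, γ)` and `k ↦ -k̄` preserves the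
lower half-plane.
-/

open Complex

/-- The entire function `c(z) = Σ (-1)^n z^n/(2n)!`, so that `c(w^2) = cos w`. -/
noncomputable def cEnt (z : ℂ) : ℂ := ∑' n : ℕ, (-1)^n * z^n / ((2*n).factorial : ℂ)

/-- The entire function `s(z) = Σ (-1)^n z^n/(2n+1)!`, so that `w * s(w^2) = sin w`. -/
noncomputable def sEnt (z : ℂ) : ℂ := ∑' n : ℕ, (-1)^n * z^n / ((2*n+1).factorial : ℂ)

noncomputable def Fminus (k : ℂ) (γ : ℝ) : ℂ :=
  2*I*k * cEnt (k^2 - I*γ) - (2*k^2 - I*γ) * sEnt (k^2 - I*γ)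

noncomputable def Fplus (k : ℂ) (γ : ℝ) : ℂ :=
  2*I*k * cEnt (k^2 + I*γ) - (2*k^2 + I*γ) * sEnt (k^2 + I*γ)

noncomputable def Fzero (k : ℂ) (γ : ℝ) : ℂ :=
  (γ:ℂ)^2 * sEnt (k^2 - I*γ) * sEnt (k^2 + I*γ)

/-- The characteristic function `F(k,ℓ,γ)` of the PT-symmetric waveguide. -/
noncomputable def FF (k : ℂ) (ℓ γ : ℝ) : ℂ :=
  Fminus k γ * Fplus k γ - Complex.exp (-4*I*k*ℓ) * Fzero k γ

open ComplexConjugate Topology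

open FormalMultilinearSeries Nat in
theorem analyticOnNhd_ofScalarsSum_of_norm_le_inv_factorial {𝕜 : Type*}
    [NontriviallyNormedField 𝕜] [CompleteSpace 𝕜] {c : ℕ → 𝕜} (hc : ∀ n, ‖c n‖ ≤ (n ! : ℝ)⁻¹) :
    AnalyticOnNhd 𝕜 (ofScalarsSum (E := 𝕜) c) Set.univ := by
  have hrad : (ofScalars 𝕜 c).radius = ⊤ := by
    refine (ofScalars 𝕜 c).radius_eq_top_of_summable_norm fun r => ?_
    refine (Real.summable_pow_div_factorial r).of_nonneg_of_le (fun n => by positivity) fun n => ?_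
    rw [ofScalars_norm, div_eq_inv_mul]
    gcongr
    exact hc n
  intro z _
  exact ((ofScalars 𝕜 c).hasFPowerSeriesOnBall (hrad ▸ ENNReal.zero_lt_top)).analyticAt_of_mem
    (by simp [hrad])

theorem Differentiable.finite_of_isBounded_of_forall_eq_zero {E : Type*} [NormedAddCommGroup E]
    [NormedSpace ℂ E] [CompleteSpace E] {f : ℂ → E} (hf : Differentiable ℂ f) {z₀ : ℂ}
    (hz₀ : f z₀ ≠ 0) {s : Set ℂ} (hs : Bornology.IsBounded s) (hzero : ∀ z ∈ s, f z = 0) :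
    s.Finite := by
  by_contra hinf
  obtain ⟨x, -, hx⟩ := Set.Infinite.exists_accPt_of_subset_isCompact hinf hs.isCompact_closure
    subset_closure
  have hfreq : ∃ᶠ z in 𝓝[≠] x, f z = 0 :=
    (accPt_iff_frequently_nhdsNE.1 hx).mono fun z hz => hzero z hz
  have hf' : AnalyticOnNhd ℂ f Set.univ := analyticOnNhd_univ_iff_differentiable.2 hf
  exact hz₀ <| hf'.eqOn_zero_of_preconnected_of_frequently_eq_zero isPreconnected_univ
    (Set.mem_univ x) hfreq (Set.mem_univ z₀)

theorem exists_sq_eq_and_re_mul_conj_nonneg (z k : ℂ) :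
    ∃ w : ℂ, w ^ 2 = z ∧ 0 ≤ (w * conj k).re := by
  obtain ⟨w, hw⟩ := IsAlgClosed.exists_pow_nat_eq z two_pos
  rcases le_total 0 (w * conj k).re with h | h
  · exact ⟨w, hw, h⟩
  · exact ⟨-w, by rw [neg_sq, hw], by rw [neg_mul, neg_re]; linarith⟩

theorem norm_le_norm_add_of_re_mul_conj_nonneg {w k : ℂ} (h : 0 ≤ (w * conj k).re) :
    ‖k‖ ≤ ‖w + k‖ := by
  rw [← sq_le_sq₀ (norm_nonneg _) (norm_nonneg _), Complex.sq_norm, Complex.sq_norm,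
    Complex.normSq_add]
  nlinarith [Complex.normSq_nonneg w]

theorem Real.exp_two_div_three_lt_two : Real.exp (2 / 3) < 2 := by
  have h : Real.exp (2 / 3) ^ 3 = Real.exp 1 ^ 2 := by
    rw [← Real.exp_nat_mul, ← Real.exp_nat_mul]; norm_num
  have he : Real.exp 1 < 2.7182818286 := Real.exp_one_lt_d9
  by_contra! h2
  have : (2:ℝ) ^ 3 ≤ Real.exp (2 / 3) ^ 3 := by gcongr
  nlinarith [Real.exp_pos 1]

theorem cEnt_eq_ofScalarsSum : cEnt = FormalMultilinearSeries.ofScalarsSum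
    (fun n => (-1) ^ n / ((2 * n).factorial : ℂ)) := by
  ext z
  rw [FormalMultilinearSeries.ofScalars_sum_eq, cEnt]
  exact tsum_congr fun n => by rw [smul_eq_mul]; ring

theorem sEnt_eq_ofScalarsSum : sEnt = FormalMultilinearSeries.ofScalarsSum
    (fun n => (-1) ^ n / ((2 * n + 1).factorial : ℂ)) := by
  ext z
  rw [FormalMultilinearSeries.ofScalars_sum_eq, sEnt]
  exact tsum_congr fun n => by rw [smul_eq_mul]; ring

theorem analyticOnNhd_cEnt : AnalyticOnNhd ℂ cEnt Set.univ := by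
  rw [cEnt_eq_ofScalarsSum]
  refine analyticOnNhd_ofScalarsSum_of_norm_le_inv_factorial fun n => ?_
  rw [norm_div, norm_pow, norm_neg, norm_one, one_pow, Complex.norm_natCast, one_div]
  gcongr
  omega

theorem analyticOnNhd_sEnt : AnalyticOnNhd ℂ sEnt Set.univ := by
  rw [sEnt_eq_ofScalarsSum]
  refine analyticOnNhd_ofScalarsSum_of_norm_le_inv_factorial fun n => ?_
  rw [norm_div, norm_pow, norm_neg, norm_one, one_pow, Complex.norm_natCast, one_div]
  gcongr
  omega

theorem cEnt_conj (z : ℂ) : cEnt (conj z) = conj (cEnt z) := by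
  simp [cEnt, Complex.conj_tsum, map_div₀]

theorem sEnt_conj (z : ℂ) : sEnt (conj z) = conj (sEnt z) := by
  simp [sEnt, Complex.conj_tsum]

theorem cEnt_sq (w : ℂ) : cEnt (w ^ 2) = Complex.cos w := by
  rw [Complex.cos_eq_tsum, cEnt]
  exact tsum_congr fun n => by rw [← pow_mul]

theorem mul_sEnt_sq (w : ℂ) : w * sEnt (w ^ 2) = Complex.sin w := by
  rw [Complex.sin_eq_tsum, sEnt, ← tsum_mul_left]
  exact tsum_congr fun n => by rw [← pow_mul]; ring

theorem differentiable_Fplus (γ : ℝ) : Differentiable ℂ (fun k => Fplus k γ) := by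
  have hc : Differentiable ℂ cEnt := fun z => (analyticOnNhd_cEnt z trivial).differentiableAt
  have hs : Differentiable ℂ sEnt := fun z => (analyticOnNhd_sEnt z trivial).differentiableAt
  unfold Fplus
  fun_prop

theorem Fminus_eq_conj_Fplus (k : ℂ) (γ : ℝ) : Fminus k γ = conj (Fplus (-conj k) γ) := by
  have h : (-conj k) ^ 2 + I * γ = conj (k ^ 2 - I * γ) := by simp
  rw [Fplus, Fminus, h, cEnt_conj, sEnt_conj]
  simp only [map_sub, map_mul, map_add, map_pow, map_neg, map_ofNat, conj_conj, conj_I, conj_ofReal]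
  ring

theorem mul_Fplus_eq {k w : ℂ} {γ : ℝ} (hw : w ^ 2 = k ^ 2 + I * γ) :
    w * Fplus k γ = I / 2 * ((w + k) ^ 2 * exp (w * I) - (w - k) ^ 2 * exp (-w * I)) := by
  have hs : w * sEnt (k ^ 2 + I * γ) = Complex.sin w := by rw [← hw, mul_sEnt_sq]
  have : w * Fplus k γ = 2 * I * k * w * Complex.cos w - (2 * k ^ 2 + I * γ) * Complex.sin w := by
    rw [Fplus, ← hw, cEnt_sq, ← hs, hw]; ring
  rw [this, Complex.cos, Complex.sin]
  linear_combination (exp (-w * I) - exp (w * I)) * I / 2 * hw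

theorem sq_norm_add_eq_of_Fplus_eq_zero {k w : ℂ} {γ : ℝ} (hw : w ^ 2 = k ^ 2 + I * γ)
    (h0 : Fplus k γ = 0) : ‖w + k‖ ^ 2 = |γ| * Real.exp w.im := by
  have hbal : (w + k) ^ 2 * exp (w * I) = (w - k) ^ 2 * exp (-w * I) := by
    have := mul_Fplus_eq hw
    rw [h0, mul_zero, eq_comm, mul_eq_zero] at this
    exact sub_eq_zero.mp (this.resolve_left (by simp))
  have hsq : ((w + k) ^ 2 * exp (w * I)) ^ 2 = -(γ : ℂ) ^ 2 := by
    calc ((w + k) ^ 2 * exp (w * I)) ^ 2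
        = (w + k) ^ 2 * exp (w * I) * ((w - k) ^ 2 * exp (-w * I)) := by rw [← hbal, sq]
      _ = ((w - k) * (w + k)) ^ 2 * (exp (-w * I) * exp (w * I)) := by ring
      _ = -(γ : ℂ) ^ 2 := by
        rw [← Complex.exp_add, show -w * I + w * I = 0 by ring, Complex.exp_zero,
          show (w - k) * (w + k) = I * γ by linear_combination hw]
        rw [mul_one, mul_pow, I_sq, neg_one_mul]
  have hnorm := congrArg norm hsq
  simp only [norm_pow, norm_mul, norm_neg, Complex.norm_exp, mul_re, I_re, I_im, mul_zero,
    mul_one, zero_sub, norm_real, Real.norm_eq_abs] at hnorm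
  have hpos : 0 ≤ ‖w + k‖ ^ 2 * Real.exp (-w.im) := by positivity
  have := (sq_eq_sq₀ hpos (abs_nonneg γ)).1 hnorm
  rw [← this, mul_assoc, ← Real.exp_add, neg_add_cancel, Real.exp_zero, mul_one]

theorem norm_lt_of_sq_norm_add_eq {γ : ℝ} (hγ : 0 < γ) {k w : ℂ} (hk : k.im ≤ 0)
    (hw : w ^ 2 = k ^ 2 + I * γ) (hwk : 0 ≤ (w * conj k).re)
    (hA : ‖w + k‖ ^ 2 = γ * Real.exp w.im) :
    ‖k‖ < √γ * (6 / 5 * max 1 √γ) := by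
  set s := √γ
  set m := max 1 s
  set a := ‖k‖
  set A := ‖w + k‖
  set d := ‖w - k‖
  by_contra! ha
  have hs : s ^ 2 = γ := Real.sq_sqrt hγ.le
  have hs0 : 0 < s := Real.sqrt_pos.2 hγ
  have hm1 : 1 ≤ m := le_max_left _ _
  have hsm : s ≤ m := le_max_right _ _
  have haA : a ≤ A := norm_le_norm_add_of_re_mul_conj_nonneg hwk
  have hdA : d * A = γ := by
    rw [← norm_mul, show (w - k) * (w + k) = I * γ by linear_combination hw]
    simp [abs_of_pos hγ]
  have h2a : 2 * a ≤ A + d := by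
    have := norm_sub_le (w + k) (w - k)
    rwa [show w + k - (w - k) = 2 * k by ring, norm_mul, Complex.norm_two] at this
  have htd : w.im ≤ d := by
    have := (le_abs_self _).trans (abs_im_le_norm (w - k))
    rw [sub_im] at this
    linarith
  have hγa : γ ≤ 5 / 6 * a := by nlinarith
  have hsa : 6 / 5 * s ≤ a := by nlinarith
  have hγa2 : 36 / 25 * γ ≤ a ^ 2 := by nlinarith
  have ha0 : 0 < a := by linarith
  have hAa : 47 / 36 * a ≤ A := by nlinarith
  have hd : d < 2 / 3 := by nlinarith
  have hexp : Real.exp w.im < 2 :=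
    (Real.exp_le_exp.2 (by linarith)).trans_lt Real.exp_two_div_three_lt_two
  nlinarith

theorem norm_lt_of_Fplus_eq_zero {γ : ℝ} (hγ : 0 < γ) {k : ℂ} (h0 : Fplus k γ = 0)
    (hk : k.im ≤ 0) : ‖k‖ < √γ * (6 / 5 * max 1 √γ) := by
  obtain ⟨w, hw, hwk⟩ := exists_sq_eq_and_re_mul_conj_nonneg (k ^ 2 + I * γ) k
  refine norm_lt_of_sq_norm_add_eq hγ hk hw hwk ?_
  rw [sq_norm_add_eq_of_Fplus_eq_zero hw h0, abs_of_pos hγ]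

theorem stmt_10 (γ : ℝ) (hγ : 0 < γ) :
    (∀ k : ℂ, Fplus k γ = 0 → k.im ≤ 0 →
        ‖k‖ < Real.sqrt γ * ((6/5) * max 1 (Real.sqrt γ))) ∧
    Set.Finite {k : ℂ | Fplus k γ = 0 ∧ k.im ≤ 0} ∧
    (∀ k : ℂ, Fminus k γ = 0 → k.im ≤ 0 →
        ‖k‖ < Real.sqrt γ * ((6/5) * max 1 (Real.sqrt γ))) ∧
    Set.Finite {k : ℂ | Fminus k γ = 0 ∧ k.im ≤ 0} := by
  set R := √γ * (6 / 5 * max 1 √γ)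
  have hplus (k : ℂ) : Fplus k γ = 0 → k.im ≤ 0 → ‖k‖ < R := norm_lt_of_Fplus_eq_zero hγ
  have hreflect (k : ℂ) (h : Fminus k γ = 0) : Fplus (-conj k) γ = 0 := by
    rwa [Fminus_eq_conj_Fplus, map_eq_zero] at h
  have hminus (k : ℂ) (h0 : Fminus k γ = 0) (hk : k.im ≤ 0) : ‖k‖ < R := by
    simpa using hplus _ (hreflect k h0) (by simpa using hk)
  have hfin : {k : ℂ | Fplus k γ = 0 ∧ k.im ≤ 0}.Finite := by
    have hR0 : 0 < R := by positivity
    have hR : Fplus (R : ℂ) γ ≠ 0 := fun h => by simpa [abs_of_pos hR0] using hplus R h (by simp)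
    refine (differentiable_Fplus γ).finite_of_isBounded_of_forall_eq_zero hR
      ((Metric.isBounded_ball (x := 0) (r := R)).subset fun k hk => ?_) fun k hk => hk.1
    simpa using hplus k hk.1 hk.2
  refine ⟨hplus, hfin, hminus, (hfin.image fun k => -conj k).subset fun k hk => ?_⟩
  exact ⟨-conj k, ⟨hreflect k hk.1, by simpa using hk.2⟩, by simp⟩
end

section
/- Key inequality from the proof of Lemma 3.5: for every u ∈ (0,1) and every β ≥ 0, u^{−4}·sinh(β/u) + √(1−u⁴)·cos(βu) − u²·sin(βu) ≥ 0. -/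
/-!
With `a = √(1 - u⁴)` and `b = u²` we have `a² + b² = 1`, so `a cos y - b sin y` is at least
`-1` everywhere and at least `-b sin y ≥ -y` while `cos y ≥ 0`; hence it is at least `-y` for
every `y ≥ 0`. Taking `y = βu ≤ β/u`, the hyperbolic term dominates:
`u⁻⁴ sinh (β/u) ≥ sinh (β/u) ≥ β/u ≥ βu`.
-/

open Real

lemma neg_le_mul_cos_sub_mul_sin {a b y : ℝ} (ha : 0 ≤ a) (hab : a ^ 2 + b ^ 2 ≤ 1)
    (hy : 0 ≤ y) : -y ≤ a * cos y - b * sin y := by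
  rcases le_or_gt y (π / 2) with hy_small | hy_large
  · have hcos : 0 ≤ cos y := cos_nonneg_of_mem_Icc ⟨by linarith [pi_pos], hy_small⟩
    have hsin : 0 ≤ sin y := sin_nonneg_of_nonneg_of_le_pi hy (by linarith [pi_pos])
    have hb : b ≤ 1 := by nlinarith
    nlinarith [sin_le hy, mul_nonneg ha hcos]
  · -- Cauchy–Schwarz: `(a cos y - b sin y)² ≤ (a² + b²)(cos² y + sin² y) ≤ 1`.
    have hsq : (a * cos y - b * sin y) ^ 2 ≤ 1 := by
      nlinarith [sq_nonneg (a * sin y + b * cos y), sin_sq_add_cos_sq y]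
    nlinarith [pi_gt_three]

theorem stmt_15 (u β : ℝ) (hu0 : 0 < u) (hu1 : u < 1) (hβ : 0 ≤ β) :
    0 ≤ u^(-4 : ℤ) * Real.sinh (β / u) + Real.sqrt (1 - u^4) * Real.cos (β * u)
        - u^2 * Real.sin (β * u) := by
  have hu4 : u ^ 4 ≤ 1 := pow_le_one₀ hu0.le hu1.le
  have hβu : β * u ≤ β / u := by
    rw [le_div_iff₀ hu0]
    nlinarith [mul_nonneg hβ hu0.le]
  have hsinh : β / u ≤ sinh (β / u) := self_le_sinh_iff.mpr (by positivity)
  have hscale : sinh (β / u) ≤ u ^ (-4 : ℤ) * sinh (β / u) :=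
    le_mul_of_one_le_left (by linarith [div_nonneg hβ hu0.le])
      (one_le_zpow_of_nonpos₀ hu0 hu1.le (by norm_num))
  have htrig := neg_le_mul_cos_sub_mul_sin (b := u ^ 2) (sqrt_nonneg (1 - u ^ 4))
    (le_of_eq (by rw [sq_sqrt (by linarith)]; ring)) (mul_nonneg hβ hu0.le)
  linarith
end
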